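/- Let f(z) := −log(1−z)/z² − 1/z − 1/2, where log(1−z) is the principal logarithm (so log(1−z) = −∑_{k=1}^∞ z^k/k for |z| ≤ 1, z ≠ 1). Then for all real r with 0 < r < 1 and all real φ with 0 < φ < π, we have −Re f(r·e^{iφ}) < −Re f(−r). -/

import Mathlib

/-!
With `T(z) = -log(1 - z) - z - z²/2` we have `f(z) = T(z)/z²` and `T'(z) = z²/(1 - z)`.
For `|w| = 1` the real function `g_w(x) = Re (T(xw)/w²)` vanishes at `0` and has derivative
`x² Re (w/(1 - xw))`, so `g_w - g_{-1}` has derivative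
`x² (1 + Re w)(1 - x) / ((1 + x)|1 - xw|²)`, which is positive on `(0, 1)` when `w ≠ -1`.
Hence `g_w(r) > g_{-1}(r)`, i.e. `Re f(rw) > Re f(-r)` after dividing by `r²`.
-/

open Real Complex

/-- The function `f(z) = -log(1-z)/z² - 1/z - 1/2` with the principal logarithm. -/
noncomputable def f12 (z : ℂ) : ℂ := -Complex.log (1 - z) / z ^ 2 - 1 / z - 1 / 2

/-- The tail `∑_{k ≥ 3} z^k / k` of the series of `-log (1 - z)`. -/
noncomputable def logTail (z : ℂ) : ℂ := -log (1 - z) - z - z ^ 2 / 2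

lemma logTail_zero : logTail 0 = 0 := by simp [logTail]

lemma f12_eq_logTail_div {z : ℂ} (hz : z ≠ 0) : f12 z = logTail z / z ^ 2 := by
  rw [f12, logTail]
  field_simp

lemma hasDerivAt_logTail {z : ℂ} (hz : 1 - z ∈ slitPlane) :
    HasDerivAt logTail (z ^ 2 / (1 - z)) z := by
  have hz0 : 1 - z ≠ 0 := slitPlane_ne_zero hz
  have h := ((((hasDerivAt_id z).const_sub 1).clog hz).neg.sub (hasDerivAt_id z)).sub
    ((hasDerivAt_pow 2 z).div_const 2)
  refine h.congr_deriv ?_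
  simp only [id]
  field_simp
  ring

lemma one_sub_ofReal_mul_mem_slitPlane {w : ℂ} (hw : ‖w‖ ≤ 1) {x : ℝ} (hx0 : 0 ≤ x)
    (hx1 : x < 1) : 1 - x * w ∈ slitPlane := by
  refine mem_slitPlane_iff.2 (Or.inl ?_)
  have : w.re ≤ 1 := (le_abs_self _).trans ((abs_re_le_norm w).trans hw)
  simp only [sub_re, one_re, re_ofReal_mul]
  nlinarith

noncomputable def radialRe (w : ℂ) (x : ℝ) : ℝ := (logTail (x * w) / w ^ 2).re

lemma radialRe_zero (w : ℂ) : radialRe w 0 = 0 := by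
  simp [radialRe, logTail_zero]

lemma re_f12_ofReal_mul {w : ℂ} (hw : w ≠ 0) {r : ℝ} (hr : r ≠ 0) :
    (f12 (r * w)).re = radialRe w r / r ^ 2 := by
  rw [f12_eq_logTail_div (mul_ne_zero (ofReal_ne_zero.2 hr) hw), radialRe, mul_pow,
    ← ofReal_pow, div_mul_eq_div_div_swap, div_ofReal_re]

lemma hasDerivAt_radialRe {w : ℂ} (hw : w ≠ 0) {x : ℝ} (hx : 1 - x * w ∈ slitPlane) :
    HasDerivAt (radialRe w) (x ^ 2 * (w / (1 - x * w)).re) x := by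
  have h := (((hasDerivAt_logTail hx).comp (x : ℂ) ((hasDerivAt_id (x : ℂ)).mul_const w)).div_const
    (w ^ 2)).real_of_complex
  refine h.congr_deriv ?_
  rw [← re_ofReal_mul, ofReal_pow]
  congr 1
  field_simp

lemma re_div_one_sub_mul_add_inv_pos {w : ℂ} (hw : ‖w‖ = 1) (hre : -1 < w.re) {x : ℝ}
    (hx0 : 0 ≤ x) (hx1 : x < 1) : 0 < (w / (1 - x * w)).re + 1 / (1 + x) := by
  have hsq : w.re * w.re + w.im * w.im = 1 := by
    rw [← normSq_apply, ← Complex.sq_norm, hw, one_pow]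
  have hnsq : normSq (1 - x * w) = (1 - x) ^ 2 + 2 * x * (1 - w.re) := by
    rw [normSq_apply]
    simp only [sub_re, one_re, re_ofReal_mul, sub_im, one_im, im_ofReal_mul]
    linear_combination x ^ 2 * hsq
  have hpos : 0 < normSq (1 - x * w) := by
    rw [hnsq]
    nlinarith [(le_abs_self _).trans ((abs_re_le_norm w).trans hw.le)]
  have key : (w / (1 - x * w)).re + 1 / (1 + x) =
      (1 + w.re) * (1 - x) / ((1 + x) * normSq (1 - x * w)) := by
    rw [div_re]
    simp only [sub_re, one_re, re_ofReal_mul, sub_im, one_im, im_ofReal_mul]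
    field_simp
    rw [hnsq]
    linear_combination -(1 + x) * x * hsq
  rw [key]
  apply div_pos <;> nlinarith

lemma hasDerivAt_radialRe_sub_radialRe_neg_one {w : ℂ} (hw : ‖w‖ = 1) {x : ℝ} (hx0 : 0 ≤ x)
    (hx1 : x < 1) :
    HasDerivAt (fun y => radialRe w y - radialRe (-1) y)
      (x ^ 2 * ((w / (1 - x * w)).re + 1 / (1 + x))) x := by
  have hw0 : w ≠ 0 := norm_ne_zero_iff.1 (by rw [hw]; exact one_ne_zero)
  have h := (hasDerivAt_radialRe hw0 (one_sub_ofReal_mul_mem_slitPlane hw.le hx0 hx1)).sub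
    (hasDerivAt_radialRe (neg_ne_zero.2 one_ne_zero)
      (one_sub_ofReal_mul_mem_slitPlane (by simp) hx0 hx1))
  refine h.congr_deriv ?_
  have : (-1 : ℂ) / (1 - x * -1) = ((-1 / (1 + x) : ℝ) : ℂ) := by push_cast; ring_nf
  rw [this, ofReal_re]
  ring

lemma radialRe_neg_one_lt {w : ℂ} (hw : ‖w‖ = 1) (hre : -1 < w.re) {r : ℝ} (hr0 : 0 < r)
    (hr1 : r < 1) : radialRe (-1) r < radialRe w r := by
  have hderiv x (hx : x ∈ Set.Icc 0 r) := hasDerivAt_radialRe_sub_radialRe_neg_one hw hx.1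
    (hx.2.trans_lt hr1)
  have hmono : StrictMonoOn (fun y => radialRe w y - radialRe (-1) y) (Set.Icc 0 r) := by
    refine strictMonoOn_of_deriv_pos (convex_Icc 0 r)
      (fun x hx => (hderiv x hx).continuousAt.continuousWithinAt) fun x hx => ?_
    rw [interior_Icc] at hx
    rw [(hderiv x (Set.Ioo_subset_Icc_self hx)).deriv]
    exact mul_pos (pow_pos hx.1 2)
      (re_div_one_sub_mul_add_inv_pos hw hre hx.1.le (hx.2.trans hr1))
  simpa only [radialRe_zero, sub_zero, sub_pos] using
    hmono (Set.left_mem_Icc.2 hr0.le) (Set.right_mem_Icc.2 hr0.le) hr0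

theorem re_f12_neg_lt_re_f12_mul {w : ℂ} (hw : ‖w‖ = 1) (hre : -1 < w.re) {r : ℝ} (hr0 : 0 < r)
    (hr1 : r < 1) : (f12 (-r)).re < (f12 (r * w)).re := by
  have hw0 : w ≠ 0 := norm_ne_zero_iff.1 (by rw [hw]; exact one_ne_zero)
  rw [← mul_neg_one, re_f12_ofReal_mul (neg_ne_zero.2 one_ne_zero) hr0.ne',
    re_f12_ofReal_mul hw0 hr0.ne']
  gcongr
  exact radialRe_neg_one_lt hw hre hr0 hr1

theorem stmt_12 (r φ : ℝ) (hr0 : 0 < r) (hr1 : r < 1) (hφ0 : 0 < φ) (hφπ : φ < π) :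
    -(f12 ((r : ℂ) * Complex.exp (Complex.I * (φ : ℂ)))).re < -(f12 (-(r : ℂ))).re := by
  have hcos : -1 < (exp (I * φ)).re := by
    rw [exp_re]
    simpa using Real.cos_lt_cos_of_nonneg_of_le_pi hφ0.le le_rfl hφπ
  exact neg_lt_neg (re_f12_neg_lt_re_f12_mul (norm_exp_I_mul_ofReal φ) hcos hr0 hr1)
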